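/- arXiv:2106.11510 — 2 statements merged into one kernel-verified Lean document; each statement's English description precedes it below -/
import Mathlib

section
/- Under the same setup, L_{t,x}(λ̄)(D₁² v⁰) = 0, i.e., the second iterated risk-tolerance derivative D₁²v⁰ = R ∂_x(R ∂_x v⁰) of the Merton value function is annihilated by the linearized Merton operator L_{t,x}(λ̄) = ∂_t + (1/2)λ̄²R²∂_{xx} + λ̄²R∂_x. -/
open Set

/-- Risk tolerance of a value function `v⁰(t,x)`: `R = -v⁰_x/v⁰_{xx}`. -/
noncomputable def Rtol (v : ℝ → ℝ → ℝ) (t x : ℝ) : ℝ :=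
  - deriv (v t) x / deriv (deriv (v t)) x

/-- `D₁ f = R f_x` with risk tolerance built from `v`. -/
noncomputable def D1op (v f : ℝ → ℝ → ℝ) (t x : ℝ) : ℝ :=
  Rtol v t x * deriv (f t) x

/-- `L_{t,x}(λ̄) f = f_t + (1/2)λ̄² R² f_{xx} + λ̄² R f_x` with risk tolerance from `v`. -/
noncomputable def LtxOp (lam : ℝ) (v f : ℝ → ℝ → ℝ) (t x : ℝ) : ℝ :=
  deriv (fun s => f s x) t + (1/2) * lam^2 * (Rtol v t x)^2 * deriv (deriv (f t)) x
    + lam^2 * Rtol v t x * deriv (f t) x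

open Filter Topology ContDiff

section helpers
variable {W : ℝ → ℝ → ℝ}

private lemma slice_x (hW : ContDiff ℝ ∞ (fun p : ℝ × ℝ => W p.1 p.2)) (t x : ℝ) :
    HasDerivAt (W t) (fderiv ℝ (fun p : ℝ × ℝ => W p.1 p.2) (t, x) (0, 1)) x := by
  have hF : HasFDerivAt (fun p : ℝ × ℝ => W p.1 p.2)
      (fderiv ℝ (fun p : ℝ × ℝ => W p.1 p.2) (t, x)) (t, x) :=
    (hW.differentiable (by norm_num)).differentiableAt.hasFDerivAt
  have hg : HasDerivAt (fun y : ℝ => ((t, y) : ℝ × ℝ)) ((0 : ℝ), (1 : ℝ)) x :=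
    (hasDerivAt_const x t).prodMk (hasDerivAt_id x)
  exact hF.comp_hasDerivAt x hg

private lemma slice_t (hW : ContDiff ℝ ∞ (fun p : ℝ × ℝ => W p.1 p.2)) (t x : ℝ) :
    HasDerivAt (fun s => W s x) (fderiv ℝ (fun p : ℝ × ℝ => W p.1 p.2) (t, x) (1, 0)) t := by
  have hF : HasFDerivAt (fun p : ℝ × ℝ => W p.1 p.2)
      (fderiv ℝ (fun p : ℝ × ℝ => W p.1 p.2) (t, x)) (t, x) :=
    (hW.differentiable (by norm_num)).differentiableAt.hasFDerivAt
  have hg : HasDerivAt (fun s : ℝ => ((s, x) : ℝ × ℝ)) ((1 : ℝ), (0 : ℝ)) t :=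
    (hasDerivAt_id t).prodMk (hasDerivAt_const t x)
  exact hF.comp_hasDerivAt t hg

private lemma smooth_dir (hW : ContDiff ℝ ∞ (fun p : ℝ × ℝ => W p.1 p.2)) (v : ℝ × ℝ) :
    ContDiff ℝ ∞ (fun p : ℝ × ℝ => fderiv ℝ (fun q : ℝ × ℝ => W q.1 q.2) p v) := by
  have h1 : ContDiff ℝ ∞ (fderiv ℝ (fun q : ℝ × ℝ => W q.1 q.2)) :=
    hW.fderiv_right (by norm_num)
  exact (ContinuousLinearMap.apply ℝ ℝ v).contDiff.comp h1

private lemma smooth_dx (hW : ContDiff ℝ ∞ (fun p : ℝ × ℝ => W p.1 p.2)) :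
    ContDiff ℝ ∞ (fun p : ℝ × ℝ => deriv (W p.1) p.2) := by
  have : (fun p : ℝ × ℝ => deriv (W p.1) p.2)
      = fun p => fderiv ℝ (fun q : ℝ × ℝ => W q.1 q.2) p (0, 1) :=
    funext fun p => (slice_x hW p.1 p.2).deriv
  rw [this]; exact smooth_dir hW _

private lemma fderiv_dir_apply (hW : ContDiff ℝ ∞ (fun p : ℝ × ℝ => W p.1 p.2))
    (p₀ v w : ℝ × ℝ) :
    fderiv ℝ (fun p : ℝ × ℝ => fderiv ℝ (fun q : ℝ × ℝ => W q.1 q.2) p v) p₀ w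
      = fderiv ℝ (fderiv ℝ (fun q : ℝ × ℝ => W q.1 q.2)) p₀ w v := by
  have hc : DifferentiableAt ℝ (fderiv ℝ (fun q : ℝ × ℝ => W q.1 q.2)) p₀ :=
    ((hW.fderiv_right (m := ∞) (by norm_num)).differentiable (by norm_num)).differentiableAt
  rw [fderiv_clm_apply hc (differentiableAt_const v)]
  simp

private lemma swap_deriv (hW : ContDiff ℝ ∞ (fun p : ℝ × ℝ => W p.1 p.2)) (t x : ℝ) :
    deriv (fun s => deriv (W s) x) t = deriv (fun y => deriv (fun s => W s y) t) x := by
  have h1 : (fun s => deriv (W s) x)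
      = fun s => fderiv ℝ (fun p : ℝ × ℝ => W p.1 p.2) (s, x) (0, 1) :=
    funext fun s => (slice_x hW s x).deriv
  have h2 : (fun y => deriv (fun s => W s y) t)
      = fun y => fderiv ℝ (fun p : ℝ × ℝ => W p.1 p.2) (t, y) (1, 0) :=
    funext fun y => (slice_t hW t y).deriv
  rw [h1, h2]
  have g1 := smooth_dir hW ((0 : ℝ), (1 : ℝ))
  have g2 := smooth_dir hW ((1 : ℝ), (0 : ℝ))
  have e1 := (slice_t (W := fun a b => fderiv ℝ (fun q : ℝ × ℝ => W q.1 q.2) (a, b) (0, 1))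
    g1 t x).deriv
  have e2 := (slice_x (W := fun a b => fderiv ℝ (fun q : ℝ × ℝ => W q.1 q.2) (a, b) (1, 0))
    g2 t x).deriv
  rw [e1, e2, fderiv_dir_apply hW, fderiv_dir_apply hW]
  exact (hW.contDiffAt.isSymmSndFDerivAt (by simp; exact WithTop.coe_le_coe.mpr (le_top : (2:ℕ∞) ≤ ⊤))) _ _
end helpers

section kernel
variable {f g h k : ℝ → ℝ} {y h' k' m' lamb : ℝ}

private lemma K7 (hf : HasDerivAt f (g y) y) (hg : HasDerivAt g (h y) y) (hgy : g y ≠ 0) :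
    HasDerivAt (fun z => -f z / g z * f z)
      ((f y)^2 * h y / (g y)^2 - 2 * f y) y := by
  have H := ((hf.neg.div hg hgy).mul hf)
  refine H.congr_deriv ?_
  simp only [Pi.neg_apply, Pi.div_apply, Pi.mul_apply, Pi.pow_apply, Pi.sub_apply,
    Pi.add_apply]
  field_simp
  ring

private lemma K3 (hf : HasDerivAt f (g y) y) (hg : HasDerivAt g (h y) y) (hgy : g y ≠ 0) :
    HasDerivAt (fun z => 1/2 * lamb^2 * (f z)^2 / g z)
      (lamb^2 * f y - lamb^2 * (f y)^2 * h y / (2 * (g y)^2)) y := by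
  have H := (((hf.pow 2).const_mul (1/2 * lamb^2)).div hg hgy)
  refine H.congr_deriv ?_
  simp only [Pi.neg_apply, Pi.div_apply, Pi.mul_apply, Pi.pow_apply, Pi.sub_apply,
    Pi.add_apply]
  field_simp
  ring

private lemma K4 (hf : HasDerivAt f (g y) y) (hg : HasDerivAt g (h y) y)
    (hh : HasDerivAt h k' y) (hgy : g y ≠ 0) :
    HasDerivAt (fun z => lamb^2 * f z - lamb^2 * (f z)^2 * h z / (2 * (g z)^2))
      (lamb^2 * g y - lamb^2 * (f y * h y) / g y - lamb^2 * ((f y)^2 * k') / (2 * (g y)^2)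
        + lamb^2 * ((f y)^2 * (h y)^2) / (g y)^3) y := by
  have hd : HasDerivAt (fun z => 2 * (g z)^2) (2 * (2 * g y ^ 1 * h y)) y :=
    (hg.pow 2).const_mul 2
  have hden : 2 * (g y)^2 ≠ 0 := by positivity
  have H := (hf.const_mul (lamb^2)).sub ((((hf.pow 2).const_mul (lamb^2)).mul hh).div hd hden)
  refine H.congr_deriv ?_
  simp only [Pi.neg_apply, Pi.div_apply, Pi.mul_apply, Pi.pow_apply, Pi.sub_apply,
    Pi.add_apply]
  field_simp
  ring

private lemma K5 (hf : HasDerivAt f (g y) y) (hg : HasDerivAt g (h y) y)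
    (hh : HasDerivAt h (k y) y) (hk : HasDerivAt k m' y) (hgy : g y ≠ 0) :
    HasDerivAt (fun z => lamb^2 * g z - lamb^2 * (f z * h z) / g z
        - lamb^2 * ((f z)^2 * k z) / (2 * (g z)^2) + lamb^2 * ((f z)^2 * (h z)^2) / (g z)^3)
      (lamb^2 * (-2 * (f y * k y) / g y + 3 * (f y * (h y)^2) / (g y)^2
        - (f y)^2 * m' / (2 * (g y)^2) + 3 * ((f y)^2 * (h y * k y)) / (g y)^3
        - 3 * ((f y)^2 * (h y)^3) / (g y)^4)) y := by
  have hden2 : 2 * (g y)^2 ≠ 0 := by positivity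
  have hden3 : (g y)^3 ≠ 0 := pow_ne_zero _ hgy
  have H := (((hg.const_mul (lamb^2)).sub
      (((hf.mul hh).const_mul (lamb^2)).div hg hgy)).sub
      ((((hf.pow 2).mul hk).const_mul (lamb^2)).div ((hg.pow 2).const_mul 2) hden2)).add
      ((((hf.pow 2).mul (hh.pow 2)).const_mul (lamb^2)).div (hg.pow 3) hden3)
  refine H.congr_deriv ?_
  simp only [Pi.neg_apply, Pi.div_apply, Pi.mul_apply, Pi.pow_apply, Pi.sub_apply,
    Pi.add_apply]
  field_simp
  ring

private lemma K1 (hf : HasDerivAt f (g y) y) (hg : HasDerivAt g (h y) y)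
    (hh : HasDerivAt h h' y) (hgy : g y ≠ 0) :
    HasDerivAt (fun z => 2 * (f z)^2 / g z - (f z)^3 * h z / (g z)^3)
      (4 * f y - 5 * ((f y)^2 * h y) / (g y)^2 - (f y)^3 * h' / (g y)^3
        + 3 * ((f y)^3 * (h y)^2) / (g y)^4) y := by
  have hden3 : (g y)^3 ≠ 0 := pow_ne_zero _ hgy
  have H := (((hf.pow 2).const_mul 2).div hg hgy).sub
      (((hf.pow 3).mul hh).div (hg.pow 3) hden3)
  refine H.congr_deriv ?_
  simp only [Pi.neg_apply, Pi.div_apply, Pi.mul_apply, Pi.pow_apply, Pi.sub_apply,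
    Pi.add_apply]
  field_simp
  ring

private lemma K2 (hf : HasDerivAt f (g y) y) (hg : HasDerivAt g (h y) y)
    (hh : HasDerivAt h (k y) y) (hk : HasDerivAt k k' y) (hgy : g y ≠ 0) :
    HasDerivAt (fun z => 4 * f z - 5 * ((f z)^2 * h z) / (g z)^2 - (f z)^3 * k z / (g z)^3
        + 3 * ((f z)^3 * (h z)^2) / (g z)^4)
      (4 * g y - 10 * (f y * h y) / g y - 8 * ((f y)^2 * k y) / (g y)^2
        + 19 * ((f y)^2 * (h y)^2) / (g y)^3 - (f y)^3 * k' / (g y)^3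
        + 9 * ((f y)^3 * (h y * k y)) / (g y)^4 - 12 * ((f y)^3 * (h y)^3) / (g y)^5) y := by
  have hden2 : (g y)^2 ≠ 0 := pow_ne_zero _ hgy
  have hden3 : (g y)^3 ≠ 0 := pow_ne_zero _ hgy
  have hden4 : (g y)^4 ≠ 0 := pow_ne_zero _ hgy
  have H := (((hf.const_mul 4).sub
      ((((hf.pow 2).mul hh).const_mul 5).div (hg.pow 2) hden2)).sub
      (((hf.pow 3).mul hk).div (hg.pow 3) hden3)).add
      ((((hf.pow 3).mul (hh.pow 2)).const_mul 3).div (hg.pow 4) hden4)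
  refine H.congr_deriv ?_
  simp only [Pi.neg_apply, Pi.div_apply, Pi.mul_apply, Pi.pow_apply, Pi.sub_apply,
    Pi.add_apply]
  field_simp
  ring

private lemma K6 {A' B' C' t : ℝ} (hf : HasDerivAt f A' t) (hg : HasDerivAt g B' t)
    (hh : HasDerivAt h C' t) (hgt : g t ≠ 0) :
    HasDerivAt (fun s => 2 * (f s)^2 / g s - (f s)^3 * h s / (g s)^3)
      (4 * f t * A' / g t - 2 * (f t)^2 * B' / (g t)^2 - 3 * ((f t)^2 * h t) * A' / (g t)^3
        - (f t)^3 * C' / (g t)^3 + 3 * ((f t)^3 * h t) * B' / (g t)^4) t := by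
  have hden3 : (g t)^3 ≠ 0 := pow_ne_zero _ hgt
  have H := (((hf.pow 2).const_mul 2).div hg hgt).sub
      (((hf.pow 3).mul hh).div (hg.pow 3) hden3)
  refine H.congr_deriv ?_
  simp only [Pi.neg_apply, Pi.div_apply, Pi.mul_apply, Pi.pow_apply, Pi.sub_apply,
    Pi.add_apply]
  field_simp
  ring
end kernel

set_option maxHeartbeats 2000000 in
/-- the second iterated risk-tolerance derivative `D₁²v⁰` of the Merton value
function is annihilated by the linearized Merton operator: `L_{t,x}(λ̄)(D₁²v⁰) = 0`. -/
theorem Ltx_annihilates_D1sq_v0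
    (T lamb : ℝ) (hT : 0 < T) (hlamb : 0 < lamb)
    (v0 : ℝ → ℝ → ℝ)
    (hv0 : ContDiff ℝ (⊤ : ℕ∞) (fun p : ℝ × ℝ => v0 p.1 p.2))
    (hvx : ∀ t ∈ Icc (0:ℝ) T, ∀ x ∈ Ioi (0:ℝ), 0 < deriv (v0 t) x)
    (hconc : ∀ t ∈ Icc (0:ℝ) T, ∀ x ∈ Ioi (0:ℝ), deriv (deriv (v0 t)) x < 0)
    (hPDE : ∀ t ∈ Icc (0:ℝ) T, ∀ x ∈ Ioi (0:ℝ),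
      deriv (fun s => v0 s x) t
        - (1/2) * lamb^2 * (deriv (v0 t) x)^2 / deriv (deriv (v0 t)) x = 0) :
    ∀ t ∈ Icc (0:ℝ) T, ∀ x ∈ Ioi (0:ℝ),
      LtxOp lamb v0 (D1op v0 (D1op v0 v0)) t x = 0 := by
  have hv : ContDiff ℝ ∞ (fun p : ℝ × ℝ => v0 p.1 p.2) := hv0.of_le (by simp)
  have hja : ContDiff ℝ ∞ (fun q : ℝ × ℝ => deriv (v0 q.1) q.2) := smooth_dx hv
  have hjb : ContDiff ℝ ∞ (fun q : ℝ × ℝ => deriv (deriv (v0 q.1)) q.2) :=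
    smooth_dx (W := fun s => deriv (v0 s)) hja
  have hjc : ContDiff ℝ ∞ (fun q : ℝ × ℝ => deriv (deriv (deriv (v0 q.1))) q.2) :=
    smooth_dx (W := fun s => deriv (deriv (v0 s))) hjb
  have h1v : ∀ s : ℝ, ContDiff ℝ ∞ (v0 s) := fun s => hv.comp (contDiff_prodMk_right s)
  have hA1 : ∀ s : ℝ, ContDiff ℝ ∞ (deriv (v0 s)) := fun s =>
    (contDiff_infty_iff_deriv.mp (h1v s)).2
  have hB1 : ∀ s : ℝ, ContDiff ℝ ∞ (deriv (deriv (v0 s))) := fun s =>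
    (contDiff_infty_iff_deriv.mp (hA1 s)).2
  have hC1 : ∀ s : ℝ, ContDiff ℝ ∞ (deriv (deriv (deriv (v0 s)))) := fun s =>
    (contDiff_infty_iff_deriv.mp (hB1 s)).2
  have hD1 : ∀ s : ℝ, ContDiff ℝ ∞ (deriv (deriv (deriv (deriv (v0 s))))) := fun s =>
    (contDiff_infty_iff_deriv.mp (hC1 s)).2
  have dA : ∀ s y : ℝ, HasDerivAt (deriv (v0 s)) (deriv (deriv (v0 s)) y) y := fun s y =>
    (((hA1 s).differentiable (by norm_num)) y).hasDerivAt
  have dB : ∀ s y : ℝ, HasDerivAt (deriv (deriv (v0 s))) (deriv (deriv (deriv (v0 s))) y) y :=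
    fun s y => (((hB1 s).differentiable (by norm_num)) y).hasDerivAt
  have dC : ∀ s y : ℝ,
      HasDerivAt (deriv (deriv (deriv (v0 s)))) (deriv (deriv (deriv (deriv (v0 s)))) y) y :=
    fun s y => (((hC1 s).differentiable (by norm_num)) y).hasDerivAt
  have dD : ∀ s y : ℝ, HasDerivAt (deriv (deriv (deriv (deriv (v0 s)))))
      (deriv (deriv (deriv (deriv (deriv (v0 s))))) y) y :=
    fun s y => (((hD1 s).differentiable (by norm_num)) y).hasDerivAt
  intro t ht x hx
  have hbne : ∀ y ∈ Ioi (0:ℝ), deriv (deriv (v0 t)) y ≠ 0 := fun y hy =>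
    ne_of_lt (hconc t ht y hy)
  have hBx : deriv (deriv (v0 t)) x ≠ 0 := hbne x hx
  -- Clairaut swaps
  have sw1 : ∀ y : ℝ, deriv (fun r => deriv (v0 r) y) t
      = deriv (fun z => deriv (fun r => v0 r z) t) y := fun y => swap_deriv hv t y
  have key1 : (fun z => deriv (fun r => deriv (v0 r) z) t)
      = deriv (fun z => deriv (fun r => v0 r z) t) := funext fun z => sw1 z
  have sw2 : ∀ y : ℝ, deriv (fun r => deriv (deriv (v0 r)) y) t
      = deriv (deriv (fun z => deriv (fun r => v0 r z) t)) y := by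
    intro y
    calc deriv (fun r => deriv (deriv (v0 r)) y) t
        = deriv (fun z => deriv (fun r => deriv (v0 r) z) t) y :=
          swap_deriv (W := fun s => deriv (v0 s)) hja t y
      _ = deriv (deriv (fun z => deriv (fun r => v0 r z) t)) y := by rw [key1]
  have key2 : (fun z => deriv (fun r => deriv (deriv (v0 r)) z) t)
      = deriv (deriv (fun z => deriv (fun r => v0 r z) t)) := funext fun z => sw2 z
  have sw3 : ∀ y : ℝ, deriv (fun r => deriv (deriv (deriv (v0 r))) y) t
      = deriv (deriv (deriv (fun z => deriv (fun r => v0 r z) t))) y := by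
    intro y
    calc deriv (fun r => deriv (deriv (deriv (v0 r))) y) t
        = deriv (fun z => deriv (fun r => deriv (deriv (v0 r)) z) t) y :=
          swap_deriv (W := fun s => deriv (deriv (v0 s))) hjb t y
      _ = deriv (deriv (deriv (fun z => deriv (fun r => v0 r z) t))) y := by rw [key2]
  -- t-direction derivatives of the slice derivatives
  have hta : ∀ y : ℝ, HasDerivAt (fun r => deriv (v0 r) y)
      (deriv (fun z => deriv (fun r => v0 r z) t) y) t := by
    intro y
    have hd : DifferentiableAt ℝ (fun r => deriv (v0 r) y) t :=
      (slice_t (W := fun s => deriv (v0 s)) hja t y).differentiableAt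
    have h2 := hd.hasDerivAt
    rwa [sw1 y] at h2
  have htb : ∀ y : ℝ, HasDerivAt (fun r => deriv (deriv (v0 r)) y)
      (deriv (deriv (fun z => deriv (fun r => v0 r z) t)) y) t := by
    intro y
    have hd : DifferentiableAt ℝ (fun r => deriv (deriv (v0 r)) y) t :=
      (slice_t (W := fun s => deriv (deriv (v0 s))) hjb t y).differentiableAt
    have h2 := hd.hasDerivAt
    rwa [sw2 y] at h2
  have htc : ∀ y : ℝ, HasDerivAt (fun r => deriv (deriv (deriv (v0 r))) y)
      (deriv (deriv (deriv (fun z => deriv (fun r => v0 r z) t))) y) t := by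
    intro y
    have hd : DifferentiableAt ℝ (fun r => deriv (deriv (deriv (v0 r))) y) t :=
      (slice_t (W := fun s => deriv (deriv (deriv (v0 s)))) hjc t y).differentiableAt
    have h2 := hd.hasDerivAt
    rwa [sw3 y] at h2
  -- PDE and the x-derivatives of the time derivative
  have hpde : ∀ y ∈ Ioi (0:ℝ), deriv (fun r => v0 r y) t
      = 1/2 * lamb^2 * (deriv (v0 t) y)^2 / deriv (deriv (v0 t)) y := fun y hy =>
    sub_eq_zero.mp (hPDE t ht y hy)
  have hp1 : ∀ y ∈ Ioi (0:ℝ), deriv (fun z => deriv (fun r => v0 r z) t) y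
      = lamb^2 * deriv (v0 t) y - lamb^2 * (deriv (v0 t) y)^2
          * deriv (deriv (deriv (v0 t))) y / (2 * (deriv (deriv (v0 t)) y)^2) := by
    intro y hy
    have hev : (fun z => deriv (fun r => v0 r z) t)
        =ᶠ[𝓝 y] fun z => 1/2 * lamb^2 * (deriv (v0 t) z)^2 / deriv (deriv (v0 t)) z := by
      filter_upwards [isOpen_Ioi.mem_nhds hy] with z hz
      exact hpde z hz
    rw [hev.deriv_eq]
    exact (K3 (dA t y) (dB t y) (hbne y hy)).deriv
  have hp2 : ∀ y ∈ Ioi (0:ℝ), deriv (deriv (fun z => deriv (fun r => v0 r z) t)) y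
      = lamb^2 * deriv (deriv (v0 t)) y
        - lamb^2 * (deriv (v0 t) y * deriv (deriv (deriv (v0 t))) y) / deriv (deriv (v0 t)) y
        - lamb^2 * ((deriv (v0 t) y)^2 * deriv (deriv (deriv (deriv (v0 t)))) y)
            / (2 * (deriv (deriv (v0 t)) y)^2)
        + lamb^2 * ((deriv (v0 t) y)^2 * (deriv (deriv (deriv (v0 t))) y)^2)
            / (deriv (deriv (v0 t)) y)^3 := by
    intro y hy
    have hev : deriv (fun z => deriv (fun r => v0 r z) t)
        =ᶠ[𝓝 y] fun z => lamb^2 * deriv (v0 t) z - lamb^2 * (deriv (v0 t) z)^2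
          * deriv (deriv (deriv (v0 t))) z / (2 * (deriv (deriv (v0 t)) z)^2) := by
      filter_upwards [isOpen_Ioi.mem_nhds hy] with z hz
      exact hp1 z hz
    rw [hev.deriv_eq]
    exact (K4 (dA t y) (dB t y) (dC t y) (hbne y hy)).deriv
  have hp3 : deriv (deriv (deriv (fun z => deriv (fun r => v0 r z) t))) x
      = lamb^2 * (-2 * (deriv (v0 t) x * deriv (deriv (deriv (deriv (v0 t)))) x)
            / deriv (deriv (v0 t)) x
        + 3 * (deriv (v0 t) x * (deriv (deriv (deriv (v0 t))) x)^2) / (deriv (deriv (v0 t)) x)^2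
        - (deriv (v0 t) x)^2 * deriv (deriv (deriv (deriv (deriv (v0 t))))) x
            / (2 * (deriv (deriv (v0 t)) x)^2)
        + 3 * ((deriv (v0 t) x)^2 * (deriv (deriv (deriv (v0 t))) x
            * deriv (deriv (deriv (deriv (v0 t)))) x)) / (deriv (deriv (v0 t)) x)^3
        - 3 * ((deriv (v0 t) x)^2 * (deriv (deriv (deriv (v0 t))) x)^3)
            / (deriv (deriv (v0 t)) x)^4) := by
    have hev : deriv (deriv (fun z => deriv (fun r => v0 r z) t))
        =ᶠ[𝓝 x] fun z => lamb^2 * deriv (deriv (v0 t)) z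
          - lamb^2 * (deriv (v0 t) z * deriv (deriv (deriv (v0 t))) z) / deriv (deriv (v0 t)) z
          - lamb^2 * ((deriv (v0 t) z)^2 * deriv (deriv (deriv (deriv (v0 t)))) z)
              / (2 * (deriv (deriv (v0 t)) z)^2)
          + lamb^2 * ((deriv (v0 t) z)^2 * (deriv (deriv (deriv (v0 t))) z)^2)
              / (deriv (deriv (v0 t)) z)^3 := by
      filter_upwards [isOpen_Ioi.mem_nhds hx] with z hz
      exact hp2 z hz
    rw [hev.deriv_eq]
    exact (K5 (dA t x) (dB t x) (dC t x) (dD t x) hBx).deriv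
  -- closed form of D₁²v⁰ wherever v_xx ≠ 0
  have hFF : ∀ (s y : ℝ), deriv (deriv (v0 s)) y ≠ 0 →
      -deriv (v0 s) y / deriv (deriv (v0 s)) y
        * deriv (fun z => -deriv (v0 s) z / deriv (deriv (v0 s)) z * deriv (v0 s) z) y
      = 2 * (deriv (v0 s) y)^2 / deriv (deriv (v0 s)) y
        - (deriv (v0 s) y)^3 * deriv (deriv (deriv (v0 s))) y / (deriv (deriv (v0 s)) y)^3 := by
    intro s y hne
    rw [(K7 (dA s y) (dB s y) hne).deriv]
    field_simp
    ring
  -- x-derivatives of D₁²v⁰ at time t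
  have hFx : ∀ y ∈ Ioi (0:ℝ),
      deriv (fun w => -deriv (v0 t) w / deriv (deriv (v0 t)) w
        * deriv (fun z => -deriv (v0 t) z / deriv (deriv (v0 t)) z * deriv (v0 t) z) w) y
      = 4 * deriv (v0 t) y
        - 5 * ((deriv (v0 t) y)^2 * deriv (deriv (deriv (v0 t))) y) / (deriv (deriv (v0 t)) y)^2
        - (deriv (v0 t) y)^3 * deriv (deriv (deriv (deriv (v0 t)))) y / (deriv (deriv (v0 t)) y)^3
        + 3 * ((deriv (v0 t) y)^3 * (deriv (deriv (deriv (v0 t))) y)^2)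
            / (deriv (deriv (v0 t)) y)^4 := by
    intro y hy
    have hev : (fun w => -deriv (v0 t) w / deriv (deriv (v0 t)) w
        * deriv (fun z => -deriv (v0 t) z / deriv (deriv (v0 t)) z * deriv (v0 t) z) w)
        =ᶠ[𝓝 y] fun w => 2 * (deriv (v0 t) w)^2 / deriv (deriv (v0 t)) w
          - (deriv (v0 t) w)^3 * deriv (deriv (deriv (v0 t))) w / (deriv (deriv (v0 t)) w)^3 := by
      filter_upwards [isOpen_Ioi.mem_nhds hy] with z hz
      exact hFF t z (hbne z hz)
    rw [hev.deriv_eq]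
    exact (K1 (dA t y) (dB t y) (dC t y) (hbne y hy)).deriv
  have hFxx : deriv (deriv (fun w => -deriv (v0 t) w / deriv (deriv (v0 t)) w
        * deriv (fun z => -deriv (v0 t) z / deriv (deriv (v0 t)) z * deriv (v0 t) z) w)) x
      = 4 * deriv (deriv (v0 t)) x
        - 10 * (deriv (v0 t) x * deriv (deriv (deriv (v0 t))) x) / deriv (deriv (v0 t)) x
        - 8 * ((deriv (v0 t) x)^2 * deriv (deriv (deriv (deriv (v0 t)))) x)
            / (deriv (deriv (v0 t)) x)^2
        + 19 * ((deriv (v0 t) x)^2 * (deriv (deriv (deriv (v0 t))) x)^2)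
            / (deriv (deriv (v0 t)) x)^3
        - (deriv (v0 t) x)^3 * deriv (deriv (deriv (deriv (deriv (v0 t))))) x
            / (deriv (deriv (v0 t)) x)^3
        + 9 * ((deriv (v0 t) x)^3 * (deriv (deriv (deriv (v0 t))) x
            * deriv (deriv (deriv (deriv (v0 t)))) x)) / (deriv (deriv (v0 t)) x)^4
        - 12 * ((deriv (v0 t) x)^3 * (deriv (deriv (deriv (v0 t))) x)^3)
            / (deriv (deriv (v0 t)) x)^5 := by
    have hev : deriv (fun w => -deriv (v0 t) w / deriv (deriv (v0 t)) w
        * deriv (fun z => -deriv (v0 t) z / deriv (deriv (v0 t)) z * deriv (v0 t) z) w)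
        =ᶠ[𝓝 x] fun w => 4 * deriv (v0 t) w
          - 5 * ((deriv (v0 t) w)^2 * deriv (deriv (deriv (v0 t))) w)
              / (deriv (deriv (v0 t)) w)^2
          - (deriv (v0 t) w)^3 * deriv (deriv (deriv (deriv (v0 t)))) w
              / (deriv (deriv (v0 t)) w)^3
          + 3 * ((deriv (v0 t) w)^3 * (deriv (deriv (deriv (v0 t))) w)^2)
              / (deriv (deriv (v0 t)) w)^4 := by
      filter_upwards [isOpen_Ioi.mem_nhds hx] with z hz
      exact hFx z hz
    rw [hev.deriv_eq]
    exact (K2 (dA t x) (dB t x) (dC t x) (dD t x) hBx).deriv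
  -- t-derivative of D₁²v⁰
  have hcontb : Continuous (fun s : ℝ => deriv (deriv (v0 s)) x) :=
    hjb.continuous.comp (continuous_id.prodMk continuous_const)
  have hbnet : ∀ᶠ s in 𝓝 t, deriv (deriv (v0 s)) x ≠ 0 :=
    hcontb.continuousAt.eventually_ne hBx
  have hFt : deriv (fun s => -deriv (v0 s) x / deriv (deriv (v0 s)) x
      * deriv (fun z => -deriv (v0 s) z / deriv (deriv (v0 s)) z * deriv (v0 s) z) x) t
      = 4 * deriv (v0 t) x * deriv (fun z => deriv (fun r => v0 r z) t) x / deriv (deriv (v0 t)) x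
        - 2 * (deriv (v0 t) x)^2 * deriv (deriv (fun z => deriv (fun r => v0 r z) t)) x
            / (deriv (deriv (v0 t)) x)^2
        - 3 * ((deriv (v0 t) x)^2 * deriv (deriv (deriv (v0 t))) x)
            * deriv (fun z => deriv (fun r => v0 r z) t) x / (deriv (deriv (v0 t)) x)^3
        - (deriv (v0 t) x)^3 * deriv (deriv (deriv (fun z => deriv (fun r => v0 r z) t))) x
            / (deriv (deriv (v0 t)) x)^3
        + 3 * ((deriv (v0 t) x)^3 * deriv (deriv (deriv (v0 t))) x)
            * deriv (deriv (fun z => deriv (fun r => v0 r z) t)) x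
            / (deriv (deriv (v0 t)) x)^4 := by
    have hev : (fun s => -deriv (v0 s) x / deriv (deriv (v0 s)) x
        * deriv (fun z => -deriv (v0 s) z / deriv (deriv (v0 s)) z * deriv (v0 s) z) x)
        =ᶠ[𝓝 t] fun s => 2 * (deriv (v0 s) x)^2 / deriv (deriv (v0 s)) x
          - (deriv (v0 s) x)^3 * deriv (deriv (deriv (v0 s))) x
              / (deriv (deriv (v0 s)) x)^3 := by
      filter_upwards [hbnet] with s hs
      exact hFF s x hs
    rw [hev.deriv_eq]
    exact (K6 (hta x) (htb x) (htc x) hBx).deriv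
  -- assemble
  show deriv (fun s => -deriv (v0 s) x / deriv (deriv (v0 s)) x
        * deriv (fun z => -deriv (v0 s) z / deriv (deriv (v0 s)) z * deriv (v0 s) z) x) t
      + 1/2 * lamb^2 * (-deriv (v0 t) x / deriv (deriv (v0 t)) x)^2
          * deriv (deriv (fun w => -deriv (v0 t) w / deriv (deriv (v0 t)) w
            * deriv (fun z => -deriv (v0 t) z / deriv (deriv (v0 t)) z * deriv (v0 t) z) w)) x
      + lamb^2 * (-deriv (v0 t) x / deriv (deriv (v0 t)) x)
          * deriv (fun w => -deriv (v0 t) w / deriv (deriv (v0 t)) w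
            * deriv (fun z => -deriv (v0 t) z / deriv (deriv (v0 t)) z * deriv (v0 t) z) w) x
      = 0
  rw [hFt, hFxx, hFx x hx, hp1 x hx, hp2 x hx, hp3]
  field_simp
  ring
end

section
/- Risk-tolerance Vega-Gamma relation: under the same setup, the z-derivative of the risk tolerance R(t,x;λ̄(z)) = −M_x/M_{xx}(t,x;λ̄(z)) satisfies R_z = (T−t) λ̄(z) λ̄'(z) R² R_{xx}. -/
open Set

/-- The λ-section of the Merton value `M(t,x;λ)`. -/
def Msec (M : ℝ → ℝ → ℝ → ℝ) (l : ℝ) : ℝ → ℝ → ℝ := fun t x => M t x l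

private lemma hasDeriv_snd {F : ℝ × ℝ → ℝ} {l x : ℝ} (hF : DifferentiableAt ℝ F (l, x)) :
    HasDerivAt (fun y => F (l, y)) (fderiv ℝ F (l, x) (0, 1)) x := by
  have h : HasDerivAt (fun y : ℝ => ((l, y) : ℝ × ℝ)) ((0 : ℝ), (1 : ℝ)) x :=
    (hasDerivAt_const x l).prodMk (hasDerivAt_id x)
  exact hF.hasFDerivAt.comp_hasDerivAt x h

private lemma hasDeriv_fst {F : ℝ × ℝ → ℝ} {l x : ℝ} (hF : DifferentiableAt ℝ F (l, x)) :
    HasDerivAt (fun m => F (m, x)) (fderiv ℝ F (l, x) (1, 0)) l := by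
  have h : HasDerivAt (fun m : ℝ => ((m, x) : ℝ × ℝ)) ((1 : ℝ), (0 : ℝ)) l :=
    (hasDerivAt_id l).prodMk (hasDerivAt_const l x)
  exact hF.hasFDerivAt.comp_hasDerivAt l h

private lemma fderiv_swap {F : ℝ × ℝ → ℝ} (hF : ContDiff ℝ (⊤ : ℕ∞) F) (p : ℝ × ℝ) (v w : ℝ × ℝ) :
    fderiv ℝ (fun q => fderiv ℝ F q v) p w = fderiv ℝ (fun q => fderiv ℝ F q w) p v := by
  have hd : DifferentiableAt ℝ (fderiv ℝ F) p :=
    ((hF.fderiv_right (m := (⊤ : ℕ∞)) (by simp)).differentiable (by simp)) p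
  have key : ∀ u : ℝ × ℝ, fderiv ℝ (fun q => fderiv ℝ F q u) p
      = (fderiv ℝ (fderiv ℝ F) p).flip u := by
    intro u
    rw [fderiv_clm_apply hd (differentiableAt_const u)]
    simp
  rw [key v, key w]
  simp only [ContinuousLinearMap.flip_apply]
  exact hF.contDiffAt.isSymmSndFDerivAt (by simp; exact (WithTop.coe_le_coe.mpr le_top : ((2:ℕ∞):WithTop ℕ∞) ≤ ((⊤:ℕ∞):WithTop ℕ∞))) w v

/-- risk-tolerance Vega-Gamma relation: for `R(t,x;λ̄(z)) = -M_x/M_{xx}`,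
one has `R_z = (T-t) λ̄(z) λ̄'(z) R² R_{xx}`. -/
theorem risk_tolerance_vega_gamma
    (T : ℝ) (hT : 0 < T) (U : ℝ → ℝ)
    (M : ℝ → ℝ → ℝ → ℝ)
    (hM : ContDiff ℝ (⊤ : ℕ∞) (fun p : ℝ × ℝ × ℝ => M p.1 p.2.1 p.2.2))
    (hMx : ∀ l > (0:ℝ), ∀ t ∈ Icc (0:ℝ) T, ∀ x ∈ Ioi (0:ℝ),
      0 < deriv (Msec M l t) x)
    (hconc : ∀ l > (0:ℝ), ∀ t ∈ Icc (0:ℝ) T, ∀ x ∈ Ioi (0:ℝ),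
      deriv (deriv (Msec M l t)) x < 0)
    (hPDE : ∀ l > (0:ℝ), ∀ t ∈ Icc (0:ℝ) T, ∀ x ∈ Ioi (0:ℝ),
      deriv (fun s => M s x l) t
        - (1/2) * l^2 * (deriv (Msec M l t) x)^2 / deriv (deriv (Msec M l t)) x = 0)
    (hterm : ∀ x ∈ Ioi (0:ℝ), ∀ l > (0:ℝ), M T x l = U x)
    -- the Vega-Gamma relation `M_λ = (T-t) λ R M_x` may be used as hypothesis:
    (hVG : ∀ l > (0:ℝ), ∀ t ∈ Icc (0:ℝ) T, ∀ x ∈ Ioi (0:ℝ),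
      deriv (fun m => M t x m) l
        = (T - t) * l * (Rtol (Msec M l) t x * deriv (Msec M l t) x))
    (lamb : ℝ → ℝ) (hlamb : ∀ z, 0 < lamb z) (hlambC1 : Differentiable ℝ lamb) :
    ∀ t ∈ Icc (0:ℝ) T, ∀ x ∈ Ioi (0:ℝ), ∀ z : ℝ,
      deriv (fun w => Rtol (Msec M (lamb w)) t x) z
        = (T - t) * lamb z * deriv lamb z * (Rtol (Msec M (lamb z)) t x)^2
            * deriv (deriv (fun y => Rtol (Msec M (lamb z)) t y)) x := by
  intro t ht x0 hx0 z
  set l0 := lamb z with hl0def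
  have hl0 : 0 < l0 := hlamb z
  -- the joint function `G (l, x) = M t x l`
  set G : ℝ × ℝ → ℝ := fun p => M t p.2 p.1 with hGdef
  have hG : ContDiff ℝ (⊤ : ℕ∞) G :=
    hM.comp (contDiff_const.prodMk (contDiff_snd.prodMk contDiff_fst))
  have hGd : Differentiable ℝ G := hG.differentiable (by simp)
  set D1 : ℝ × ℝ → ℝ := fun p => fderiv ℝ G p (1, 0) with hD1def
  set D2 : ℝ × ℝ → ℝ := fun p => fderiv ℝ G p (0, 1) with hD2def
  have hD1 : ContDiff ℝ (⊤ : ℕ∞) D1 :=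
    (hG.fderiv_right (m := (⊤ : ℕ∞)) (by simp)).clm_apply contDiff_const
  have hD2 : ContDiff ℝ (⊤ : ℕ∞) D2 :=
    (hG.fderiv_right (m := (⊤ : ℕ∞)) (by simp)).clm_apply contDiff_const
  set D3 : ℝ × ℝ → ℝ := fun p => fderiv ℝ D2 p (0, 1) with hD3def
  have hD3 : ContDiff ℝ (⊤ : ℕ∞) D3 :=
    (hD2.fderiv_right (m := (⊤ : ℕ∞)) (by simp)).clm_apply contDiff_const
  set E : ℝ × ℝ → ℝ := fun p => fderiv ℝ D1 p (0, 1) with hEdef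
  have hE : ContDiff ℝ (⊤ : ℕ∞) E :=
    (hD1.fderiv_right (m := (⊤ : ℕ∞)) (by simp)).clm_apply contDiff_const
  -- identification of partial derivatives
  have h1 : ∀ l x, deriv (Msec M l t) x = D2 (l, x) := by
    intro l x
    have h := hasDeriv_snd (F := G) (hGd (l, x))
    simp only [hD2def]
    exact h.deriv
  have h2 : ∀ l x, deriv (deriv (Msec M l t)) x = D3 (l, x) := by
    intro l x
    have e : deriv (Msec M l t) = fun y => D2 (l, y) := funext fun y => h1 l y
    rw [e]
    have h := hasDeriv_snd (F := D2) ((hD2.differentiable (by simp)) (l, x))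
    simp only [hD3def]
    exact h.deriv
  have h3 : ∀ l x, deriv (fun m => M t x m) l = D1 (l, x) := by
    intro l x
    have h := hasDeriv_fst (F := G) (hGd (l, x))
    simp only [hD1def]
    exact h.deriv
  -- concavity gives nonvanishing second derivative
  have hBneg : ∀ y ∈ Ioi (0:ℝ), D3 (l0, y) < 0 := by
    intro y hy
    have h := hconc l0 hl0 t ht y hy
    rwa [h2] at h
  have hB0ne : D3 (l0, x0) ≠ 0 := ne_of_lt (hBneg x0 hx0)
  -- normalize the goal
  simp only [Rtol, h1, h2]
  set R : ℝ → ℝ := fun y => -D2 (l0, y) / D3 (l0, y) with hRdef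
  -- basic facts about the x-sections at l0
  have hAder : ∀ y : ℝ, HasDerivAt (fun y' => D2 (l0, y')) (D3 (l0, y)) y := by
    intro y
    have h := hasDeriv_snd (F := D2) ((hD2.differentiable (by simp)) (l0, y))
    simp only [hD3def]
    exact h
  have hA_cd : ContDiff ℝ (⊤ : ℕ∞) (fun y => D2 (l0, y)) :=
    hD2.comp (contDiff_const.prodMk contDiff_id)
  have hB_cd : ContDiff ℝ (⊤ : ℕ∞) (fun y => D3 (l0, y)) :=
    hD3.comp (contDiff_const.prodMk contDiff_id)
  have hRca : ∀ y ∈ Ioi (0:ℝ), ContDiffAt ℝ (⊤ : ℕ∞) R y := by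
    intro y hy
    rw [hRdef]
    exact ((hA_cd.contDiffAt.neg).div hB_cd.contDiffAt (ne_of_lt (hBneg y hy)))
  have hRdiff : ∀ y ∈ Ioi (0:ℝ), DifferentiableAt ℝ R y := fun y hy =>
    (hRca y hy).differentiableAt (by simp)
  have hdR_diff : DifferentiableAt ℝ (deriv R) x0 := by
    have hOn : ContDiffOn ℝ (⊤ : ℕ∞) R (Ioi 0) := fun y hy => (hRca y hy).contDiffWithinAt
    have h := hOn.deriv_of_isOpen isOpen_Ioi (m := (⊤ : ℕ∞)) (by simp)
    exact ((h x0 hx0).contDiffAt (isOpen_Ioi.mem_nhds hx0)).differentiableAt (by simp)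
  -- Vega-Gamma as a statement about the sections
  have hVGl : Set.EqOn (fun y => D1 (l0, y))
      (fun y => (T - t) * l0 * (R y * D2 (l0, y))) (Ioi 0) := by
    intro y hy
    have h := hVG l0 hl0 t ht y hy
    simp only [Rtol, h1, h2, h3] at h
    simpa only [hRdef] using h
  -- first x-derivative of the Vega-Gamma right-hand side, on Ioi 0
  have hψ' : Set.EqOn (deriv (fun y' => (T - t) * l0 * (R y' * D2 (l0, y'))))
      (fun y => (T - t) * l0 * ((deriv R y - 1) * D2 (l0, y))) (Ioi 0) := by
    intro y hy
    have hprod : HasDerivAt (fun y' => (T - t) * l0 * (R y' * D2 (l0, y')))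
        ((T - t) * l0 * (deriv R y * D2 (l0, y) + R y * D3 (l0, y))) y :=
      (((hRdiff y hy).hasDerivAt.mul (hAder y)).const_mul _)
    have hRB : R y * D3 (l0, y) = -D2 (l0, y) := by
      simp only [hRdef]
      rw [neg_div, neg_mul, div_mul_cancel₀ _ (ne_of_lt (hBneg y hy))]
    rw [hprod.deriv, hRB]
    ring
  -- the l-derivative of M_x(x0) equals the x-derivative of M_λ at x0
  have hMl1 : ∀ y ∈ Ioi (0:ℝ), deriv (fun y' => D1 (l0, y')) y
      = deriv (fun y' => (T - t) * l0 * (R y' * D2 (l0, y'))) y := by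
    intro y hy
    exact Filter.EventuallyEq.deriv_eq
      (Filter.eventuallyEq_of_mem (isOpen_Ioi.mem_nhds hy) hVGl)
  -- second x-derivative of the Vega-Gamma right-hand side at x0
  have hψ'' : deriv (deriv (fun y' => (T - t) * l0 * (R y' * D2 (l0, y')))) x0
      = (T - t) * l0 * (deriv (deriv R) x0 * D2 (l0, x0)
          + (deriv R x0 - 1) * D3 (l0, x0)) := by
    have hev : deriv (fun y' => (T - t) * l0 * (R y' * D2 (l0, y')))
        =ᶠ[nhds x0] fun y => (T - t) * l0 * ((deriv R y - 1) * D2 (l0, y)) :=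
      Filter.eventuallyEq_of_mem (isOpen_Ioi.mem_nhds hx0) hψ'
    rw [hev.deriv_eq]
    have hh : HasDerivAt (fun y => (T - t) * l0 * ((deriv R y - 1) * D2 (l0, y)))
        ((T - t) * l0 * (deriv (deriv R) x0 * D2 (l0, x0)
          + (deriv R x0 - 1) * D3 (l0, x0))) x0 :=
      (((hdR_diff.hasDerivAt.sub_const 1).mul (hAder x0)).const_mul _)
    exact hh.deriv
  -- symmetry of mixed partial derivatives
  have hswap1 : ∀ p : ℝ × ℝ, fderiv ℝ D2 p (1, 0) = fderiv ℝ D1 p (0, 1) := by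
    intro p
    rw [hD2def, hD1def]
    exact fderiv_swap hG p (0, 1) (1, 0)
  have hswap2 : ∀ p : ℝ × ℝ, fderiv ℝ D3 p (1, 0) = fderiv ℝ E p (0, 1) := by
    intro p
    rw [hD3def]
    rw [fderiv_swap hD2 p (0, 1) (1, 0)]
    have e : (fun q : ℝ × ℝ => fderiv ℝ D2 q (1, 0))
        = fun q => fderiv ℝ D1 q (0, 1) := funext fun q => hswap1 q
    rw [e, ← hEdef]
  have hE_sec : ∀ y : ℝ, E (l0, y) = deriv (fun y' => D1 (l0, y')) y := by
    intro y
    have h := hasDeriv_snd (F := D1) ((hD1.differentiable (by simp)) (l0, y))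
    simp only [hEdef]
    exact h.deriv.symm
  have hBeq : deriv (deriv (fun y' => D1 (l0, y'))) x0 = fderiv ℝ E (l0, x0) (0, 1) := by
    have e : deriv (fun y' => D1 (l0, y')) = fun y => E (l0, y) :=
      funext fun y => (hE_sec y).symm
    rw [e]
    exact (hasDeriv_snd (F := E) ((hE.differentiable (by simp)) (l0, x0))).deriv
  -- the l-derivatives of M_x and M_{xx} at (l0, x0)
  have hDlA : HasDerivAt (fun m => D2 (m, x0))
      ((T - t) * l0 * ((deriv R x0 - 1) * D2 (l0, x0))) l0 := by
    have h := hasDeriv_fst (F := D2) ((hD2.differentiable (by simp)) (l0, x0))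
    rw [hswap1 (l0, x0)] at h
    have hAeq : fderiv ℝ D1 (l0, x0) (0, 1) = deriv (fun y' => D1 (l0, y')) x0 :=
      ((hasDeriv_snd (F := D1) ((hD1.differentiable (by simp)) (l0, x0))).deriv).symm
    rw [hAeq, hMl1 x0 hx0, hψ' hx0] at h
    exact h
  have hDlB : HasDerivAt (fun m => D3 (m, x0))
      ((T - t) * l0 * (deriv (deriv R) x0 * D2 (l0, x0)
        + (deriv R x0 - 1) * D3 (l0, x0))) l0 := by
    have h := hasDeriv_fst (F := D3) ((hD3.differentiable (by simp)) (l0, x0))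
    rw [hswap2 (l0, x0), ← hBeq] at h
    have e2' : deriv (deriv (fun y' => D1 (l0, y'))) x0
        = deriv (deriv (fun y' => (T - t) * l0 * (R y' * D2 (l0, y')))) x0 := by
      apply Filter.EventuallyEq.deriv_eq
      exact Filter.eventuallyEq_of_mem (isOpen_Ioi.mem_nhds hx0) fun y hy => hMl1 y hy
    rw [e2', hψ''] at h
    exact h
  -- quotient rule in l, then chain rule in z
  have hq : HasDerivAt (fun m => -(D2 (m, x0) / D3 (m, x0)))
      (-(((T - t) * l0 * ((deriv R x0 - 1) * D2 (l0, x0)) * D3 (l0, x0)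
          - D2 (l0, x0) * ((T - t) * l0 * (deriv (deriv R) x0 * D2 (l0, x0)
            + (deriv R x0 - 1) * D3 (l0, x0)))) / D3 (l0, x0) ^ 2)) l0 :=
    ((hDlA.div hDlB hB0ne).neg)
  have hq' : HasDerivAt (fun m => -(D2 (m, x0) / D3 (m, x0)))
      (-(((T - t) * l0 * ((deriv R x0 - 1) * D2 (l0, x0)) * D3 (l0, x0)
          - D2 (l0, x0) * ((T - t) * l0 * (deriv (deriv R) x0 * D2 (l0, x0)
            + (deriv R x0 - 1) * D3 (l0, x0)))) / D3 (l0, x0) ^ 2)) (lamb z) := by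
    rw [← hl0def]; exact hq
  have hchain := hq'.comp z (hlambC1 z).hasDerivAt
  have hLHS : deriv (fun w => -D2 (lamb w, x0) / D3 (lamb w, x0)) z
      = -(((T - t) * l0 * ((deriv R x0 - 1) * D2 (l0, x0)) * D3 (l0, x0)
          - D2 (l0, x0) * ((T - t) * l0 * (deriv (deriv R) x0 * D2 (l0, x0)
            + (deriv R x0 - 1) * D3 (l0, x0)))) / D3 (l0, x0) ^ 2) * deriv lamb z := by
    have e : (fun w => -D2 (lamb w, x0) / D3 (lamb w, x0))
        = (fun m => -(D2 (m, x0) / D3 (m, x0))) ∘ lamb := by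
      funext w; simp [neg_div]
    rw [e]
    exact hchain.deriv
  rw [hLHS]
  field_simp
  ring
end
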